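/- Let S be a semigroup and let p be a strongly productive ultrafilter on S that is multiplicatively isomorphic to an ordered union ultrafilter. Then p is sparse. -/

import Mathlib

/-- `𝔽`: the collection of finite nonempty subsets of `ℕ`. -/
abbrev FinsetNat := {a : Finset ℕ // a.Nonempty}

/-- `listMul a l` is the product `a * l₀ * l₁ * ⋯` of a nonempty list in a magma. -/
def listMul {S : Type*} [Mul S] : S → List S → S
  | a, [] => a
  | a, b :: l => a * listMul b l

/-- `finsetMul x a` is the product `∏_{i ∈ a} x i`, taken in increasing order of indices
(junk value `x 0` if `a` is empty). -/
def finsetMul {S : Type*} [Mul S] (x : ℕ → S) (a : Finset ℕ) : S :=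
  match (a.sort (· ≤ ·)).map x with
  | [] => x 0
  | b :: l => listMul b l

/-- `FPIn x D` is the set of products `∏_{i ∈ a} x i` (in increasing order of indices), where
`a` ranges over the finite nonempty subsets of `D`. -/
def FPIn {S : Type*} [Semigroup S] (x : ℕ → S) (D : Set ℕ) : Set S :=
  {s | ∃ a : Finset ℕ, a.Nonempty ∧ ↑a ⊆ D ∧ s = finsetMul x a}

/-- `FPfin x` is the set of products `∏_{i ∈ a} x i` (in increasing order of indices), where
`a` ranges over all finite nonempty subsets of `ℕ`. -/
def FPfin {S : Type*} [Semigroup S] (x : ℕ → S) : Set S :=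
  FPIn x Set.univ

/-- An ultrafilter `p` on a semigroup `S` is *strongly productive* if every member of `p`
contains a set of the form `FP x` that itself belongs to `p`. -/
def StronglyProductive {S : Type*} [Semigroup S] (p : Ultrafilter S) : Prop :=
  ∀ A ∈ p, ∃ x : ℕ → S, FPfin x ⊆ A ∧ FPfin x ∈ p

/-- A sequence in `𝔽` is *ordered* if `max (b n) < min (b (n+1))` for all `n`. -/
def OrderedSeq (b : ℕ → FinsetNat) : Prop :=
  ∀ n : ℕ, (b n : Finset ℕ).max' (b n).2 < (b (n + 1) : Finset ℕ).min' (b (n + 1)).2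

/-- `FU b` is the set of unions `⋃_{i ∈ a} b i` with `a` a finite nonempty subset of `ℕ`. -/
def FU (b : ℕ → FinsetNat) : Set FinsetNat :=
  {c | ∃ a : Finset ℕ, a.Nonempty ∧ (c : Finset ℕ) = a.biUnion fun i => (b i : Finset ℕ)}

/-- An ultrafilter `q` on `𝔽` is an *ordered union ultrafilter* if every member of `q` contains
a set of the form `FU b`, with `b` ordered, that itself belongs to `q`. -/
def OrderedUnionUltrafilter (q : Ultrafilter FinsetNat) : Prop :=
  ∀ A ∈ q, ∃ b : ℕ → FinsetNat, OrderedSeq b ∧ FU b ⊆ A ∧ FU b ∈ q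

/-- A strongly productive ultrafilter `p` on `S` is *multiplicatively isomorphic to an ordered
union ultrafilter* if there is a sequence `x` in `S` such that `a ↦ ∏_{i ∈ a} x i` is injective
and `{f⁻¹[A] : A ∈ p}` is an ordered union ultrafilter on `𝔽`. -/
def MultIsoOrderedUnion {S : Type*} [Semigroup S] (p : Ultrafilter S) : Prop :=
  ∃ x : ℕ → S, Function.Injective (fun a : FinsetNat => finsetMul x (a : Finset ℕ)) ∧
    ∃ q : Ultrafilter FinsetNat, OrderedUnionUltrafilter q ∧
      ∀ B : Set FinsetNat,
        B ∈ q ↔ ∃ A ∈ p, B = (fun a : FinsetNat => finsetMul x (a : Finset ℕ)) ⁻¹' A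

/-- A strongly productive ultrafilter `p` on `S` is *sparse* if for every `A ∈ p` there are a
sequence `x` in `S` and an infinite set `D ⊆ ℕ` with infinite complement such that
`FP x ⊆ A` and the set of finite products of the subsequence of `x` indexed by `D` is in `p`. -/
def SparseSP {S : Type*} [Semigroup S] (p : Ultrafilter S) : Prop :=
  ∀ A ∈ p, ∃ (x : ℕ → S) (D : Set ℕ), D.Infinite ∧ D.compl.Infinite ∧
    FPfin x ⊆ A ∧ FPIn x D ∈ p

/-!
Transporting along `c ↦ ∏_{i ∈ c} x i` reduces everything to the ordered union ultrafilter `q`.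
Given `X ∈ q`, take an ordered `b` with `FU b ⊆ X` and `FU b ∈ q`. The unions of blocks of `b`
whose index set skips an index strictly inside it form a member of `q`: otherwise `q` would
contain some `FU d` free of such unions, but `d 0 ∪ d 2` skips the blocks making up `d 1`.
So `q` contains some `FU d` made of gapped unions. Cutting each `d n` at its gap `b (g n)` into a
lower part `u n` and an upper part `v n` yields the ordered sequence
`u 0, b (g 0), v 0, u 1, b (g 1), v 1, …`, all of whose unions lie in `FU b`, while its unions
over the indices `k` with `k % 3 ≠ 1` include `FU d ∈ q`.
-/

namespace OrderedSeq

variable {b : ℕ → FinsetNat}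

theorem lt_of_mem (hb : OrderedSeq b) {i j : ℕ} (hij : i < j) {s t : ℕ}
    (hs : s ∈ (b i : Finset ℕ)) (ht : t ∈ (b j : Finset ℕ)) : s < t := by
  have hmax : ∀ k, i < k → (b i : Finset ℕ).max' (b i).2 < (b k : Finset ℕ).min' (b k).2 := by
    intro k hik
    induction k, hik using Nat.le_induction with
    | base => exact hb i
    | succ k _ ih =>
      calc _ < (b k : Finset ℕ).min' (b k).2 := ih
        _ ≤ (b k : Finset ℕ).max' (b k).2 := Finset.min'_le _ _ (Finset.max'_mem _ _)
        _ < _ := hb k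
  calc s ≤ _ := Finset.le_max' _ _ hs
    _ < _ := hmax j hij
    _ ≤ t := Finset.min'_le _ _ ht

theorem lt_of_forall_lt (hb : OrderedSeq b) {i j : ℕ}
    (h : ∀ s ∈ (b i : Finset ℕ), ∀ t ∈ (b j : Finset ℕ), s < t) : i < j := by
  obtain ⟨s, hs⟩ := (b i).2
  obtain ⟨t, ht⟩ := (b j).2
  by_contra! hji
  rcases hji.lt_or_eq with hji | rfl
  · exact (h s hs t ht).asymm (hb.lt_of_mem hji ht hs)
  · exact (h s hs s hs).false

theorem of_forall_lt (h : ∀ n, ∀ s ∈ (b n : Finset ℕ), ∀ t ∈ (b (n + 1) : Finset ℕ), s < t) :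
    OrderedSeq b :=
  fun n => h n _ (Finset.max'_mem _ _) _ (Finset.min'_mem _ _)

end OrderedSeq

section finsetMul

variable {S : Type*} [Semigroup S] (x : ℕ → S)

theorem finsetMul_singleton (m : ℕ) : finsetMul x {m} = x m := by
  simp [finsetMul, listMul]

theorem finsetMul_insert_of_lt {m : ℕ} {s : Finset ℕ} (hs : s.Nonempty) (hm : ∀ i ∈ s, m < i) :
    finsetMul x (insert m s) = x m * finsetMul x s := by
  have hsort : (insert m s).sort (· ≤ ·) = m :: s.sort (· ≤ ·) :=
    Finset.sort_insert _ (fun i hi => (hm i hi).le) fun hms => (hm m hms).false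
  obtain ⟨i, l, hl⟩ : ∃ i l, s.sort (· ≤ ·) = i :: l :=
    List.exists_cons_of_ne_nil (by simpa [← List.length_pos_iff] using hs)
  simp [finsetMul, hsort, hl, listMul]

theorem finsetMul_union {s t : Finset ℕ} (hs : s.Nonempty) (ht : t.Nonempty)
    (hst : ∀ i ∈ s, ∀ j ∈ t, i < j) :
    finsetMul x (s ∪ t) = finsetMul x s * finsetMul x t := by
  induction s using Finset.induction_on_min with
  | empty => exact absurd hs Finset.not_nonempty_empty
  | insert m s hm ih =>
    rcases s.eq_empty_or_nonempty with rfl | hs'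
    · simp only [insert_empty_eq, Finset.singleton_union, finsetMul_singleton]
      exact finsetMul_insert_of_lt x ht (hst m (Finset.mem_singleton_self m))
    · have hmt : ∀ j ∈ t, m < j := hst m (Finset.mem_insert_self m s)
      rw [Finset.insert_union, finsetMul_insert_of_lt x (hs'.mono Finset.subset_union_left)
          (Finset.forall_mem_union.2 ⟨hm, hmt⟩),
        finsetMul_insert_of_lt x hs' hm,
        ih hs' fun i hi => hst i (Finset.mem_insert_of_mem hi), mul_assoc]


theorem finsetMul_biUnion {e : ℕ → FinsetNat} (he : OrderedSeq e) {a : Finset ℕ}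
    (ha : a.Nonempty) :
    finsetMul (fun n => finsetMul x (e n : Finset ℕ)) a
      = finsetMul x (a.biUnion fun n => (e n : Finset ℕ)) := by
  induction a using Finset.induction_on_min with
  | empty => exact absurd ha Finset.not_nonempty_empty
  | insert m a hm ih =>
    rcases a.eq_empty_or_nonempty with rfl | ha'
    · simp [finsetMul_singleton]
    · rw [finsetMul_insert_of_lt _ ha' hm, ih ha', Finset.biUnion_insert,
        finsetMul_union x (e m).2 (ha'.biUnion fun n _ => (e n).2)]
      intro s hs t ht
      obtain ⟨n, hn, htn⟩ := Finset.mem_biUnion.1 ht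
      exact he.lt_of_mem (hm n hn) hs htn

end finsetMul

theorem self_mem_FU (b : ℕ → FinsetNat) (n : ℕ) : b n ∈ FU b :=
  ⟨{n}, Finset.singleton_nonempty n, by simp⟩

theorem FU_subset_of_forall_mem {b e : ℕ → FinsetNat} (he : ∀ k, e k ∈ FU b) : FU e ⊆ FU b := by
  choose γ hγ hγe using he
  rintro c ⟨a, ha, hc⟩
  refine ⟨a.biUnion γ, ha.biUnion fun k _ => hγ k, ?_⟩
  rw [hc, Finset.biUnion_biUnion]
  exact Finset.biUnion_congr rfl fun k _ => hγe k

def FUIn (e : ℕ → FinsetNat) (D : Set ℕ) : Set FinsetNat :=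
  {c | ∃ a : Finset ℕ, a.Nonempty ∧ ↑a ⊆ D ∧ (c : Finset ℕ) = a.biUnion fun i => (e i : Finset ℕ)}

theorem FUIn_univ (e : ℕ → FinsetNat) : FUIn e Set.univ = FU e := by
  ext c
  simp [FUIn, FU]

def HasGap (b : ℕ → FinsetNat) (c : Finset ℕ) : Prop :=
  ∃ β : Finset ℕ, ∃ g ∉ β, (∃ i ∈ β, i < g) ∧ (∃ j ∈ β, g < j) ∧
    c = β.biUnion fun i => (b i : Finset ℕ)

theorem OrderedUnionUltrafilter.setOf_hasGap_mem {q : Ultrafilter FinsetNat}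
    (hq : OrderedUnionUltrafilter q) {b : ℕ → FinsetNat} (hb : OrderedSeq b) (hbq : FU b ∈ q) :
    {c : FinsetNat | HasGap b c} ∈ q := by
  by_contra h
  obtain ⟨d, hd, hdsub, -⟩ := hq _ (Filter.inter_mem hbq (Ultrafilter.compl_mem_iff_notMem.2 h))
  choose β hβ hβd using fun k => (hdsub (self_mem_FU d k)).1
  have hidx : ∀ {k l}, k < l → ∀ i ∈ β k, ∀ j ∈ β l, i < j := fun hkl i hi j hj =>
    hb.lt_of_forall_lt fun s hs t ht => hd.lt_of_mem hkl
      (hβd _ ▸ Finset.mem_biUnion.2 ⟨i, hi, hs⟩) (hβd _ ▸ Finset.mem_biUnion.2 ⟨j, hj, ht⟩)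
  obtain ⟨g, hg⟩ := hβ 1
  obtain ⟨i, hi⟩ := hβ 0
  obtain ⟨j, hj⟩ := hβ 2
  let c : FinsetNat := ⟨(d 0 : Finset ℕ) ∪ d 2, (d 0).2.mono Finset.subset_union_left⟩
  have hc : c ∈ FU d := ⟨{0, 2}, Finset.insert_nonempty _ _, by simp [c]⟩
  refine (hdsub hc).2 ⟨β 0 ∪ β 2, g, ?_, ⟨i, Finset.mem_union_left _ hi, hidx one_pos i hi g hg⟩,
    ⟨j, Finset.mem_union_right _ hj, hidx one_lt_two g hg j hj⟩, ?_⟩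
  · rw [Finset.mem_union, not_or]
    exact ⟨fun h => (hidx one_pos g h g hg).false, fun h => (hidx one_lt_two g hg g h).false⟩
  · simp [c, Finset.union_biUnion, hβd]

theorem HasGap.exists_split {b : ℕ → FinsetNat} (hb : OrderedSeq b) {c : Finset ℕ}
    (hc : HasGap b c) : ∃ (u v : FinsetNat) (g : ℕ), u ∈ FU b ∧ v ∈ FU b ∧
      c = (u : Finset ℕ) ∪ v ∧ (∀ s ∈ (u : Finset ℕ), ∀ t ∈ (b g : Finset ℕ), s < t) ∧
      (∀ s ∈ (b g : Finset ℕ), ∀ t ∈ (v : Finset ℕ), s < t) := by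
  obtain ⟨β, g, hgβ, ⟨i, hiβ, hig⟩, ⟨j, hjβ, hgj⟩, rfl⟩ := hc
  have hlo : (β.filter (· < g)).Nonempty := ⟨i, Finset.mem_filter.2 ⟨hiβ, hig⟩⟩
  have hhi : (β.filter (g < ·)).Nonempty := ⟨j, Finset.mem_filter.2 ⟨hjβ, hgj⟩⟩
  refine ⟨⟨_, hlo.biUnion fun k _ => (b k).2⟩, ⟨_, hhi.biUnion fun k _ => (b k).2⟩, g,
    ⟨_, hlo, rfl⟩, ⟨_, hhi, rfl⟩, ?_, ?_, ?_⟩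
  · rw [← Finset.union_biUnion, Finset.filter_union_right, Finset.filter_true_of_mem]
    exact fun k hk => lt_or_gt_of_ne fun hkg => hgβ (hkg ▸ hk)
  · intro s hs t ht
    obtain ⟨k, hk, hsk⟩ := Finset.mem_biUnion.1 hs
    exact hb.lt_of_mem (Finset.mem_filter.1 hk).2 hsk ht
  · intro s hs t ht
    obtain ⟨k, hk, htk⟩ := Finset.mem_biUnion.1 ht
    exact hb.lt_of_mem (Finset.mem_filter.1 hk).2 hs htk

section interleave3

variable {α : Type*} (u m v : ℕ → α)

def interleave3 (k : ℕ) : α :=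
  if k % 3 = 0 then u (k / 3) else if k % 3 = 1 then m (k / 3) else v (k / 3)

@[simp]
theorem interleave3_three_mul (n : ℕ) : interleave3 u m v (3 * n) = u n := by
  simp [interleave3]

@[simp]
theorem interleave3_three_mul_add_one (n : ℕ) : interleave3 u m v (3 * n + 1) = m n := by
  simp [interleave3, Nat.add_mod, Nat.add_div]

@[simp]
theorem interleave3_three_mul_add_two (n : ℕ) : interleave3 u m v (3 * n + 2) = v n := by
  simp [interleave3, Nat.add_mod, Nat.add_div]

theorem interleave3_mem {P : Set α} (hu : ∀ n, u n ∈ P) (hm : ∀ n, m n ∈ P) (hv : ∀ n, v n ∈ P)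
    (k : ℕ) : interleave3 u m v k ∈ P := by
  unfold interleave3
  split_ifs <;> simp only [hu, hm, hv]

end interleave3

theorem OrderedSeq.interleave3 {u m v : ℕ → FinsetNat}
    (hum : ∀ n, ∀ s ∈ (u n : Finset ℕ), ∀ t ∈ (m n : Finset ℕ), s < t)
    (hmv : ∀ n, ∀ s ∈ (m n : Finset ℕ), ∀ t ∈ (v n : Finset ℕ), s < t)
    (hvu : ∀ n, ∀ s ∈ (v n : Finset ℕ), ∀ t ∈ (u (n + 1) : Finset ℕ), s < t) :
    OrderedSeq (interleave3 u m v) := by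
  refine OrderedSeq.of_forall_lt fun k => ?_
  obtain ⟨n, rfl | rfl | rfl⟩ : ∃ n, k = 3 * n ∨ k = 3 * n + 1 ∨ k = 3 * n + 2 := ⟨k / 3, by omega⟩
  · simpa using hum n
  · simpa using hmv n
  · rw [show 3 * n + 2 + 1 = 3 * (n + 1) by ring]
    simpa using hvu n

theorem OrderedUnionUltrafilter.exists_sparse {q : Ultrafilter FinsetNat}
    (hq : OrderedUnionUltrafilter q) {X : Set FinsetNat} (hX : X ∈ q) :
    ∃ (e : ℕ → FinsetNat) (D : Set ℕ), OrderedSeq e ∧ D.Infinite ∧ Dᶜ.Infinite ∧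
      FU e ⊆ X ∧ FUIn e D ∈ q := by
  obtain ⟨b, hb, hbX, hbq⟩ := hq X hX
  obtain ⟨d, hd, hdG, hdq⟩ := hq _ (hq.setOf_hasGap_mem hb hbq)
  choose u v g hu hv hduv hug hgv using fun n => (hdG (self_mem_FU d n)).exists_split hb
  have hvu : ∀ n, ∀ s ∈ (v n : Finset ℕ), ∀ t ∈ (u (n + 1) : Finset ℕ), s < t :=
    fun n s hs t ht => hd.lt_of_mem n.lt_succ_self (hduv n ▸ Finset.mem_union_right _ hs)
      (hduv (n + 1) ▸ Finset.mem_union_left _ ht)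
  refine ⟨interleave3 u (b ∘ g) v, {k | k % 3 ≠ 1}, OrderedSeq.interleave3 hug hgv hvu, ?_, ?_,
    ?_, ?_⟩
  · exact Set.infinite_of_injective_forall_mem (f := (3 * ·)) (fun _ _ h => by dsimp only at h; omega)
      fun n => by simp
  · exact Set.infinite_of_injective_forall_mem (f := (3 * · + 1)) (fun _ _ h => by dsimp only at h; omega)
      fun n => by simp [Nat.add_mod]
  · exact (FU_subset_of_forall_mem (interleave3_mem _ _ _ hu (fun n => self_mem_FU b _) hv)).trans
      hbX
  · refine Filter.mem_of_superset hdq ?_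
    rintro c ⟨a, ha, hc⟩
    refine ⟨a.biUnion fun n => {3 * n, 3 * n + 2}, ha.biUnion fun _ _ => Finset.insert_nonempty _ _,
      ?_, ?_⟩
    · intro k hk
      simp only [Finset.coe_biUnion, Finset.coe_insert, Finset.coe_singleton, Set.mem_iUnion,
        Set.mem_insert_iff, Set.mem_singleton_iff] at hk
      obtain ⟨n, -, rfl | rfl⟩ := hk <;> simp [Nat.add_mod]
    · rw [hc, Finset.biUnion_biUnion]
      exact Finset.biUnion_congr rfl fun n _ => by simp [hduv]

theorem FPIn_finsetMul_eq_image {S : Type*} [Semigroup S] (x : ℕ → S) {e : ℕ → FinsetNat}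
    (he : OrderedSeq e) (D : Set ℕ) :
    FPIn (fun n => finsetMul x (e n : Finset ℕ)) D
      = (fun c : FinsetNat => finsetMul x (c : Finset ℕ)) '' FUIn e D := by
  ext s
  constructor
  · rintro ⟨a, ha, haD, rfl⟩
    exact ⟨⟨_, ha.biUnion fun n _ => (e n).2⟩, ⟨a, ha, haD, rfl⟩,
      (finsetMul_biUnion x he ha).symm⟩
  · rintro ⟨c, ⟨a, ha, haD, hc⟩, rfl⟩
    exact ⟨a, ha, haD, ((finsetMul_biUnion x he ha).trans (congrArg (finsetMul x) hc.symm)).symm⟩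

theorem sparse_of_multIsoOrderedUnion_general {S : Type*} [Semigroup S] (p : Ultrafilter S)
    (hiso : MultIsoOrderedUnion p) :
    SparseSP p := by
  obtain ⟨x, -, q, hq, hpq⟩ := hiso
  set f : FinsetNat → S := fun c => finsetMul x (c : Finset ℕ)
  have hrange : Set.range f ∈ p := by
    refine Ultrafilter.compl_notMem_iff.1 fun h => ?_
    simpa using (hpq _).2 ⟨_, h, rfl⟩
  intro A hA
  obtain ⟨e, D, he, hD, hDc, heA, heD⟩ := hq.exists_sparse ((hpq _).2 ⟨A, hA, rfl⟩)
  obtain ⟨A', hA', hA'e⟩ := (hpq _).1 heD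
  refine ⟨fun n => f (e n), D, hD, hDc, ?_, ?_⟩
  · rw [FPfin, FPIn_finsetMul_eq_image x he, FUIn_univ]
    exact (Set.image_mono heA).trans (Set.image_preimage_subset f A)
  · rw [FPIn_finsetMul_eq_image x he, hA'e, Set.image_preimage_eq_inter_range]
    exact Filter.inter_mem hA' hrange

/-- If a strongly productive ultrafilter on a semigroup is multiplicatively isomorphic to an
ordered union ultrafilter, then it is sparse. -/
theorem sparse_of_multIsoOrderedUnion {S : Type*} [Semigroup S] (p : Ultrafilter S)
    (hsp : StronglyProductive p) (hiso : MultIsoOrderedUnion p) :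
    SparseSP p :=
  sparse_of_multIsoOrderedUnion_general p hiso
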